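/- (Theorem 2.1, full equivalence) Let μ₀ be a measure on (X, 𝔅). Then μ₀ satisfies ∫ V·(f ∘ r) dμ₀ = ∫ f dμ₀ for all f ∈ L^∞(X, μ₀) if and only if there exists a nonnegative measurable function Δ on X with ∑_{r(y)=x} Δ(y) = 1 for μ₀-a.e. x and ∫ V·f dμ₀ = ∫ ∑_{r(y)=x} Δ(y) f(y) dμ₀(x) for all f ∈ L^∞(X, μ₀). -/

import Mathlib

open MeasureTheory ENNReal

/-!
Put `ν = V · μ₀`. Tested on indicators, the fixed-point identity says exactly that `r` pushes `ν`
forward to `μ₀`. Lift `μ₀` to the measure `λ(E) = ∫ #(E ∩ r⁻¹{x}) dμ₀(x)`; it is σ-finite, and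
`r_* ν ≪ μ₀` forces `ν ≪ λ`. The density `Δ = dν/dλ` then gives
`∫ f dν = ∫ Δ f dλ = ∫ ∑_{r y = x} Δ(y) f(y) dμ₀(x)`, and for `f = g ∘ r` the left side is
`∫ g dμ₀`, so `∑_{r y = x} Δ(y) = 1` almost everywhere. The converse is the same computation
applied to `f ∘ r`.
-/

theorem finsum_preimage_mul_comp {X Y R : Type*} [NonUnitalNonAssocSemiring R]
    [NoZeroDivisors R] (r : X → Y) (Δ : X → R) (f : Y → R) (y : Y) :
    ∑ᶠ x ∈ r ⁻¹' {y}, Δ x * f (r x) = (∑ᶠ x ∈ r ⁻¹' {y}, Δ x) * f y := by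
  rw [finsum_mem_mul]
  exact finsum_mem_congr rfl fun x hx => by rw [show r x = y from hx]

structure MeasurableBranches {X Y : Type*} [MeasurableSpace X] [MeasurableSpace Y]
    (r : X → Y) where
  card : Y → ℕ
  measurable_card : Measurable card
  branch : ℕ → Y → X
  preimage_eq : ∀ y, r ⁻¹' {y} = (fun i => branch i y) '' {i | 1 ≤ i ∧ i ≤ card y}
  injOn : ∀ y, Set.InjOn (fun i => branch i y) {i | 1 ≤ i ∧ i ≤ card y}
  measurable_restrict : ∀ i, Measurable ({y | i ≤ card y}.domRestrict (branch i))

namespace MeasurableBranches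

variable {X Y : Type*} [MeasurableSpace X] [MeasurableSpace Y] {r : X → Y}

theorem apply_branch (B : MeasurableBranches r) {y : Y} {i : ℕ} (h1 : 1 ≤ i)
    (hi : i ≤ B.card y) : r (B.branch i y) = y :=
  (B.preimage_eq y ▸ ⟨i, ⟨h1, hi⟩, rfl⟩ : B.branch i y ∈ r ⁻¹' {y})

theorem finite_preimage (B : MeasurableBranches r) (y : Y) : (r ⁻¹' {y}).Finite :=
  B.preimage_eq y ▸ ((Set.finite_Icc 1 (B.card y)).image _)

theorem finsum_preimage_eq_sum (B : MeasurableBranches r) {M : Type*} [AddCommMonoid M]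
    (g : X → M) (y : Y) :
    ∑ᶠ x ∈ r ⁻¹' {y}, g x = ∑ i ∈ Finset.range (B.card y), g (B.branch (i + 1) y) := by
  have hIcc : {i | 1 ≤ i ∧ i ≤ B.card y} = ↑(Finset.Icc 1 (B.card y)) := by
    ext; simp
  rw [B.preimage_eq y, finsum_mem_image (B.injOn y), hIcc, finsum_mem_coe_finset,
    Finset.range_eq_Ico, Finset.sum_Ico_add' (fun i => g (B.branch i y))]
  rfl

theorem measurableSet_le_card (B : MeasurableBranches r) (i : ℕ) :
    MeasurableSet {y | i ≤ B.card y} :=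
  B.measurable_card measurableSet_Ici

theorem measurable_indicator_comp_branch (B : MeasurableBranches r) {M : Type*} [Zero M]
    [MeasurableSpace M] {g : X → M} (hg : Measurable g) (i : ℕ) :
    Measurable ({y | i ≤ B.card y}.indicator (g ∘ B.branch i)) := by
  refine measurable_of_restrict_of_restrict_compl (B.measurableSet_le_card i) ?_ ?_
  · have : {y | i ≤ B.card y}.domRestrict ({y | i ≤ B.card y}.indicator (g ∘ B.branch i)) =
        g ∘ {y | i ≤ B.card y}.domRestrict (B.branch i) :=
      funext fun y => Set.indicator_of_mem y.2 _
    exact this ▸ hg.comp (B.measurable_restrict i)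
  · have : {y | i ≤ B.card y}ᶜ.domRestrict ({y | i ≤ B.card y}.indicator (g ∘ B.branch i)) = 0 :=
      funext fun y => Set.indicator_of_notMem y.2 _
    exact this ▸ measurable_const

theorem measurable_finsum_preimage (B : MeasurableBranches r) {M : Type*} [AddCommMonoid M]
    [MeasurableSpace M] [MeasurableAdd₂ M] {g : X → M} (hg : Measurable g) :
    Measurable fun y => ∑ᶠ x ∈ r ⁻¹' {y}, g x := by
  have : Measurable fun p : Y × ℕ => ∑ i ∈ Finset.range p.2,
      {y | i + 1 ≤ B.card y}.indicator (g ∘ B.branch (i + 1)) p.1 :=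
    measurable_from_prod_countable_left fun n =>
      Finset.measurable_sum (Finset.range n) fun i _ =>
        B.measurable_indicator_comp_branch hg (i + 1)
  convert this.comp (measurable_id.prodMk B.measurable_card) using 1
  ext y
  rw [B.finsum_preimage_eq_sum]
  exact Finset.sum_congr rfl fun i hi => (Set.indicator_of_mem (s := {y | i + 1 ≤ B.card y})
    (Finset.mem_range.1 hi) (g ∘ B.branch (i + 1))).symm

-- Branches are labelled from `1`, hence the shift `i + 1`.
noncomputable def lift (B : MeasurableBranches r) (μ : Measure Y) : Measure X :=
  Measure.sum fun i : ℕ => (μ.comap ((↑) : {y | i + 1 ≤ B.card y} → Y)).map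
    ({y | i + 1 ≤ B.card y}.domRestrict (B.branch (i + 1)))

theorem lintegral_lift (B : MeasurableBranches r) (μ : Measure Y) {g : X → ℝ≥0∞}
    (hg : Measurable g) : ∫⁻ x, g x ∂B.lift μ = ∫⁻ y, ∑ᶠ x ∈ r ⁻¹' {y}, g x ∂μ := by
  have hterm : ∀ i : ℕ, ∫⁻ x, g x ∂(μ.comap ((↑) : {y | i + 1 ≤ B.card y} → Y)).map
      ({y | i + 1 ≤ B.card y}.domRestrict (B.branch (i + 1))) =
      ∫⁻ y, {y | i + 1 ≤ B.card y}.indicator (g ∘ B.branch (i + 1)) y ∂μ := fun i => by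
    rw [lintegral_map hg (B.measurable_restrict _), lintegral_indicator (B.measurableSet_le_card _),
      ← lintegral_subtype_comap (B.measurableSet_le_card _)]
    rfl
  have hpt : ∀ y, ∑' i : ℕ, {y | i + 1 ≤ B.card y}.indicator (g ∘ B.branch (i + 1)) y =
      ∑ᶠ x ∈ r ⁻¹' {y}, g x := fun y => by
    rw [B.finsum_preimage_eq_sum, tsum_eq_sum (s := Finset.range (B.card y))]
    · exact Finset.sum_congr rfl fun i hi => Set.indicator_of_mem
        (s := {y | i + 1 ≤ B.card y}) (Finset.mem_range.1 hi) (g ∘ B.branch (i + 1))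
    · exact fun i hi => Set.indicator_of_notMem (s := {y | i + 1 ≤ B.card y})
        (by simpa using hi) (g ∘ B.branch (i + 1))
  rw [lift, lintegral_sum_measure]
  simp_rw [hterm]
  rw [← lintegral_tsum fun i => (B.measurable_indicator_comp_branch hg (i + 1)).aemeasurable]
  simp_rw [hpt]

theorem sigmaFinite_lift (B : MeasurableBranches r) (hr : Measurable r) (μ : Measure Y)
    [IsFiniteMeasure μ] : SigmaFinite (B.lift μ) := by
  let G : ℕ → Set X := fun n => r ⁻¹' {y | B.card y ≤ n}
  have hG : ∀ n, MeasurableSet (G n) := fun n => hr (B.measurable_card measurableSet_Iic)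
  have hfib : ∀ n y, ∑ᶠ x ∈ r ⁻¹' {y}, (G n).indicator 1 x ≤ (n : ℝ≥0∞) := fun n y => by
    rw [B.finsum_preimage_eq_sum]
    by_cases hy : B.card y ≤ n
    · calc ∑ i ∈ Finset.range (B.card y), (G n).indicator 1 (B.branch (i + 1) y)
          ≤ ∑ _i ∈ Finset.range (B.card y), (1 : ℝ≥0∞) :=
            Finset.sum_le_sum fun i _ => Set.indicator_le_self' (fun _ _ => zero_le_one) _
        _ ≤ n := by simpa using hy
    · refine le_of_eq_of_le (Finset.sum_eq_zero fun i hi => Set.indicator_of_notMem ?_ _) zero_le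
      simpa [G, B.apply_branch (Nat.le_add_left 1 i) (Finset.mem_range.1 hi)] using hy
  refine ⟨⟨⟨G, fun _ => trivial, fun n => ?_, ?_⟩⟩⟩
  · rw [← lintegral_indicator_one (hG n), B.lintegral_lift μ (measurable_one.indicator (hG n))]
    refine (lintegral_mono (hfib n)).trans_lt ?_
    rw [lintegral_const]
    exact ENNReal.mul_lt_top (by simp) (measure_lt_top μ _)
  · exact Set.eq_univ_of_forall fun x =>
      Set.mem_iUnion.2 ⟨B.card (r x), show B.card (r x) ≤ _ from le_rfl⟩

theorem absolutelyContinuous_lift (B : MeasurableBranches r) (hr : Measurable r)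
    {μ : Measure Y} {ν : Measure X} (h : ν.map r ≪ μ) : ν ≪ B.lift μ := by
  refine Measure.AbsolutelyContinuous.mk fun s hs hs0 => ?_
  let F : Y → ℝ≥0∞ := fun y => ∑ᶠ x ∈ r ⁻¹' {y}, s.indicator 1 x
  have hF : Measurable F := B.measurable_finsum_preimage (measurable_one.indicator hs)
  have hF0 : μ {y | F y ≠ 0} = 0 := by
    refine ae_iff.1 ((lintegral_eq_zero_iff hF).1 ?_)
    rw [← B.lintegral_lift μ (measurable_one.indicator hs), lintegral_indicator_one hs, hs0]
  have hsub : s ⊆ r ⁻¹' {y | F y ≠ 0} := fun x hx => by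
    have hmem : x ∈ (B.finite_preimage (r x)).toFinset := by simp
    refine ne_of_gt (lt_of_lt_of_le ?_ (le_of_le_of_eq
      (Finset.single_le_sum (fun _ _ => zero_le) hmem)
      (finsum_mem_eq_finite_toFinset_sum _ _).symm))
    simp [hx]
  have hmeas : MeasurableSet {y | F y ≠ 0} := hF (measurableSet_singleton 0).compl
  exact measure_mono_null hsub ((Measure.map_apply hr hmeas).symm.trans (h hF0))

theorem integrable_finsum_preimage (B : MeasurableBranches r) {μ : Measure Y} {g : X → ℝ}
    (hg : Measurable g) (hgi : Integrable g (B.lift μ)) :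
    Integrable (fun y => ∑ᶠ x ∈ r ⁻¹' {y}, g x) μ := by
  refine ⟨(B.measurable_finsum_preimage hg).aestronglyMeasurable, ?_⟩
  calc ∫⁻ y, ‖∑ᶠ x ∈ r ⁻¹' {y}, g x‖ₑ ∂μ ≤ ∫⁻ y, ∑ᶠ x ∈ r ⁻¹' {y}, ‖g x‖ₑ ∂μ :=
        lintegral_mono fun y => by
          simp_rw [B.finsum_preimage_eq_sum]
          exact enorm_sum_le _ _
    _ = ∫⁻ x, ‖g x‖ₑ ∂B.lift μ := (B.lintegral_lift μ hg.enorm).symm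
    _ < ∞ := hgi.2

theorem integral_lift_of_nonneg (B : MeasurableBranches r) {μ : Measure Y} {g : X → ℝ}
    (hg : Measurable g) (hg0 : 0 ≤ g) (hgi : Integrable g (B.lift μ)) :
    ∫ x, g x ∂B.lift μ = ∫ y, ∑ᶠ x ∈ r ⁻¹' {y}, g x ∂μ := by
  have hfib : ∀ y, ENNReal.ofReal (∑ᶠ x ∈ r ⁻¹' {y}, g x) =
      ∑ᶠ x ∈ r ⁻¹' {y}, ENNReal.ofReal (g x) := fun y => by
      simp_rw [B.finsum_preimage_eq_sum]
      exact ENNReal.ofReal_sum_of_nonneg fun _ _ => hg0 _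
  rw [integral_eq_lintegral_of_nonneg_ae (ae_of_all _ hg0) hg.aestronglyMeasurable,
    integral_eq_lintegral_of_nonneg_ae (ae_of_all _ fun y => ?_)
      (B.integrable_finsum_preimage hg hgi).1, B.lintegral_lift μ hg.ennreal_ofReal]
  · simp_rw [hfib]
  · rw [B.finsum_preimage_eq_sum]
    exact Finset.sum_nonneg fun _ _ => hg0 _

theorem integral_lift (B : MeasurableBranches r) {μ : Measure Y} {g : X → ℝ}
    (hg : Measurable g) (hgi : Integrable g (B.lift μ)) :
    ∫ x, g x ∂B.lift μ = ∫ y, ∑ᶠ x ∈ r ⁻¹' {y}, g x ∂μ := by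
  have hpos : Measurable fun x => max (g x) 0 := hg.max measurable_const
  have hneg : Measurable fun x => max (-g x) 0 := hg.neg.max measurable_const
  have hfib : ∀ y, ∑ᶠ x ∈ r ⁻¹' {y}, g x =
      ∑ᶠ x ∈ r ⁻¹' {y}, max (g x) 0 - ∑ᶠ x ∈ r ⁻¹' {y}, max (-g x) 0 := fun y => by
    simp_rw [B.finsum_preimage_eq_sum, ← Finset.sum_sub_distrib,
      max_zero_sub_max_neg_zero_eq_self]
  calc ∫ x, g x ∂B.lift μ = ∫ x, max (g x) 0 ∂B.lift μ - ∫ x, max (-g x) 0 ∂B.lift μ := by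
        rw [← integral_sub hgi.pos_part hgi.neg_part]
        simp_rw [max_zero_sub_max_neg_zero_eq_self]
    _ = ∫ y, ∑ᶠ x ∈ r ⁻¹' {y}, max (g x) 0 ∂μ - ∫ y, ∑ᶠ x ∈ r ⁻¹' {y}, max (-g x) 0 ∂μ := by
        rw [B.integral_lift_of_nonneg hpos (fun x => le_max_right _ _) hgi.pos_part,
          B.integral_lift_of_nonneg hneg (fun x => le_max_right _ _) hgi.neg_part]
    _ = ∫ y, ∑ᶠ x ∈ r ⁻¹' {y}, g x ∂μ := by
        rw [← integral_sub (B.integrable_finsum_preimage hpos hgi.pos_part)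
          (B.integrable_finsum_preimage hneg hgi.neg_part)]
        simp_rw [hfib]

theorem exists_density_of_map_eq (B : MeasurableBranches r) (hr : Measurable r) {μ : Measure Y}
    [IsFiniteMeasure μ] {ν : Measure X} [IsFiniteMeasure ν] (hν : ν.map r = μ) :
    ∃ Δ : X → ℝ, Measurable Δ ∧ (∀ x, 0 ≤ Δ x) ∧
      (∀ᵐ y ∂μ, ∑ᶠ x ∈ r ⁻¹' {y}, Δ x = 1) ∧
      ∀ f : X → ℝ, Measurable f → (∃ C, ∀ x, |f x| ≤ C) →
        ∫ x, f x ∂ν = ∫ y, ∑ᶠ x ∈ r ⁻¹' {y}, Δ x * f x ∂μ := by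
  have := B.sigmaFinite_lift hr μ
  have hac : ν ≪ B.lift μ := B.absolutelyContinuous_lift hr (hν ▸ .rfl)
  set Δ : X → ℝ := fun x => (ν.rnDeriv (B.lift μ) x).toReal
  have hΔm : Measurable Δ := (Measure.measurable_rnDeriv _ _).ennreal_toReal
  have hΔi : Integrable Δ (B.lift μ) := Measure.integrable_toReal_rnDeriv
  have hdisint : ∀ f : X → ℝ, Measurable f → (∃ C, ∀ x, |f x| ≤ C) →
      ∫ x, f x ∂ν = ∫ y, ∑ᶠ x ∈ r ⁻¹' {y}, Δ x * f x ∂μ := by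
    rintro f hf ⟨C, hC⟩
    rw [← integral_rnDeriv_smul hac]
    exact B.integral_lift (g := fun x => Δ x * f x) (hΔm.mul hf)
      (hΔi.mul_bdd hf.aestronglyMeasurable (ae_of_all _ hC))
  refine ⟨Δ, hΔm, fun _ => ENNReal.toReal_nonneg, ?_, hdisint⟩
  refine (B.integrable_finsum_preimage hΔm hΔi).ae_eq_of_forall_setIntegral_eq _ _
    (integrable_const 1) fun s hs _ => ?_
  have h := hdisint (s.indicator 1 ∘ r) ((measurable_one.indicator hs).comp hr)
    ⟨1, fun x => by by_cases hx : r x ∈ s <;> simp [hx]⟩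
  simp_rw [Function.comp_apply, finsum_preimage_mul_comp] at h
  rw [← integral_map hr.aemeasurable (measurable_one.indicator hs).aestronglyMeasurable, hν] at h
  rw [setIntegral_const, smul_eq_mul, mul_one, ← integral_indicator_one hs, h,
    ← integral_indicator hs]
  exact integral_congr_ae (ae_of_all _ fun y => by by_cases hy : y ∈ s <;> simp [hy])

end MeasurableBranches

theorem map_withDensity_ofReal_eq {X Y : Type*} [MeasurableSpace X] [MeasurableSpace Y]
    {r : X → Y} (hr : Measurable r) {μ : Measure X} {μ' : Measure Y} [IsFiniteMeasure μ']
    {V : X → ℝ} (hV0 : ∀ x, 0 ≤ V x) (hVi : Integrable V μ)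
    (h : ∀ s, MeasurableSet s → ∫ x, V x * s.indicator 1 (r x) ∂μ = ∫ y, s.indicator 1 y ∂μ') :
    (μ.withDensity fun x => ENNReal.ofReal (V x)).map r = μ' := by
  ext s hs
  have hind : (fun x => V x * s.indicator 1 (r x)) = (r ⁻¹' s).indicator V := by
    ext x; by_cases hx : r x ∈ s <;> simp [hx]
  rw [Measure.map_apply hr hs, withDensity_apply _ (hr hs),
    ← ofReal_integral_eq_lintegral_ofReal hVi.restrict (ae_of_all _ hV0),
    ← integral_indicator (hr hs), ← hind, h s hs, integral_indicator_one hs, ofReal_measureReal]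

theorem stmt10_general {X : Type*} [MeasurableSpace X] (r : X → X) (hr : Measurable r)
    (c : X → ℕ) (hcm : Measurable c)
    (τ : ℕ → X → X)
    (hτfib : ∀ x, r ⁻¹' {x} = (fun i => τ i x) '' {i | 1 ≤ i ∧ i ≤ c x})
    (hτinj : ∀ x, Set.InjOn (fun i => τ i x) {i | 1 ≤ i ∧ i ≤ c x})
    (hτmeas : ∀ i, Measurable (({x | i ≤ c x}).restrict (τ i)))
    (V : X → ℝ) (hVm : Measurable V) (hVpos : ∀ x, 0 ≤ V x) (hVbdd : ∃ C, ∀ x, V x ≤ C)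
    (μ₀ : Measure X) [IsFiniteMeasure μ₀] :
    (∀ f : X → ℝ, Measurable f → (∃ C, ∀ x, |f x| ≤ C) →
        ∫ x, V x * f (r x) ∂μ₀ = ∫ x, f x ∂μ₀) ↔
    (∃ Δ : X → ℝ, Measurable Δ ∧ (∀ x, 0 ≤ Δ x) ∧
      (∀ᵐ x ∂μ₀, ∑ᶠ y ∈ r ⁻¹' {x}, Δ y = 1) ∧
      (∀ f : X → ℝ, Measurable f → (∃ C, ∀ x, |f x| ≤ C) →
        ∫ x, V x * f x ∂μ₀ = ∫ x, ∑ᶠ y ∈ r ⁻¹' {x}, Δ y * f y ∂μ₀)) := by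
  constructor
  · intro H
    let B : MeasurableBranches r := ⟨c, hcm, τ, hτfib, hτinj, hτmeas⟩
    obtain ⟨C, hC⟩ := hVbdd
    have hVi : Integrable V μ₀ := .of_bound hVm.aestronglyMeasurable C
      (ae_of_all _ fun x => (Real.norm_of_nonneg (hVpos x)).trans_le (hC x))
    let ν := μ₀.withDensity fun x => ENNReal.ofReal (V x)
    have : IsFiniteMeasure ν := isFiniteMeasure_withDensity_ofReal hVi.2
    have hν : ν.map r = μ₀ := map_withDensity_ofReal_eq hr hVpos hVi fun s hs =>
      H _ (measurable_one.indicator hs) ⟨1, fun x => by by_cases hx : x ∈ s <;> simp [hx]⟩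
    obtain ⟨Δ, hΔm, hΔ0, hΔsum, hΔint⟩ := B.exists_density_of_map_eq hr hν
    refine ⟨Δ, hΔm, hΔ0, hΔsum, fun f hf hfb => ?_⟩
    rw [← hΔint f hf hfb, integral_withDensity_eq_integral_toReal_smul hVm.ennreal_ofReal
      (ae_of_all _ fun _ => ENNReal.ofReal_lt_top)]
    simp_rw [ENNReal.toReal_ofReal (hVpos _), smul_eq_mul]
  · rintro ⟨Δ, -, -, hΔsum, hΔint⟩ f hf ⟨C, hC⟩
    rw [hΔint (fun x => f (r x)) (hf.comp hr) ⟨C, fun x => hC (r x)⟩]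
    refine integral_congr_ae ?_
    filter_upwards [hΔsum] with x hx
    rw [finsum_preimage_mul_comp, hx, one_mul]

/-- Theorem 2.1, full equivalence: μ₀ has the fixed-point property
∫ V·(f∘r) dμ₀ = ∫ f dμ₀ for all bounded measurable f iff there exists a nonnegative
measurable Δ with ∑_{r(y)=x} Δ(y) = 1 μ₀-a.e. and
∫ V·f dμ₀ = ∫ ∑_{r(y)=x} Δ(y) f(y) dμ₀(x) for all bounded measurable f. -/
theorem stmt10 {X : Type*} [MeasurableSpace X] (r : X → X) (hr : Measurable r)
    (hsurj : Function.Surjective r) (hfin : ∀ x, (r ⁻¹' {x}).Finite)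
    (c : X → ℕ) (hc : ∀ x, c x = Nat.card (r ⁻¹' {x})) (hcm : Measurable c)
    (τ : ℕ → X → X)
    (hτfib : ∀ x, r ⁻¹' {x} = (fun i => τ i x) '' {i | 1 ≤ i ∧ i ≤ c x})
    (hτinj : ∀ x, Set.InjOn (fun i => τ i x) {i | 1 ≤ i ∧ i ≤ c x})
    (hτmeas : ∀ i, Measurable (({x | i ≤ c x}).restrict (τ i)))
    (hτim : ∀ i, MeasurableSet (τ i '' {x | i ≤ c x}))
    (V : X → ℝ) (hVm : Measurable V) (hVpos : ∀ x, 0 ≤ V x) (hVbdd : ∃ C, ∀ x, V x ≤ C)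
    (μ₀ : Measure X) [IsFiniteMeasure μ₀] :
    (∀ f : X → ℝ, Measurable f → (∃ C, ∀ x, |f x| ≤ C) →
        ∫ x, V x * f (r x) ∂μ₀ = ∫ x, f x ∂μ₀) ↔
    (∃ Δ : X → ℝ, Measurable Δ ∧ (∀ x, 0 ≤ Δ x) ∧
      (∀ᵐ x ∂μ₀, ∑ᶠ y ∈ r ⁻¹' {x}, Δ y = 1) ∧
      (∀ f : X → ℝ, Measurable f → (∃ C, ∀ x, |f x| ≤ C) →
        ∫ x, V x * f x ∂μ₀ = ∫ x, ∑ᶠ y ∈ r ⁻¹' {x}, Δ y * f y ∂μ₀)) :=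
  stmt10_general r hr c hcm τ hτfib hτinj hτmeas V hVm hVpos hVbdd μ₀
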